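/- arXiv:2201.10944 — 2 statements merged into one kernel-verified Lean document; each statement's English description precedes it below -/
import Mathlib

section
/- Let M be a 2×2 integer matrix that is ∩-symmetric (i.e. M − Mᵀ = J where J = !![0, 1; -1, 0]). Then det M = 0 if and only if there exists a matrix P in SL(2,ℤ) such that Pᵀ * M * P = !![0, 1; 0, 0]. (This is the algebraic classification of the Seifert forms that are realizable by embeddings of the torus into ℝ³, combining Theorem 2(a) and 2(c) of the paper: a ∩-symmetric bilinear form on H₁ of the torus takes the shape ((x₁,y₁),(x₂,y₂)) ↦ x₁y₂ in some positively oriented basis exactly when its determinant vanishes.) -/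
open Matrix

/-- The matrix of the intersection form of the torus on `H₁ ≅ ℤ²`. -/
def Jmat : Matrix (Fin 2) (Fin 2) ℤ := !![0, 1; -1, 0]

lemma tr_fin_two (a b c d : ℤ) : (!![a, b; c, d] : Matrix (Fin 2) (Fin 2) ℤ)ᵀ = !![a, c; b, d] := by
  ext i j
  fin_cases i <;> fin_cases j <;> rfl

lemma seifert_key (n : ℕ) : ∀ a c d : ℤ, a.natAbs = n → a * d = c * (c + 1) →
    ∃ P : Matrix.SpecialLinearGroup (Fin 2) ℤ,
      (P : Matrix (Fin 2) (Fin 2) ℤ)ᵀ * !![a, c + 1; c, d] * (P : Matrix (Fin 2) (Fin 2) ℤ)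
        = !![0, 1; 0, 0] := by
  induction n using Nat.strong_induction_on with
  | _ n ih =>
    intro a c d hn h
    by_cases ha : a = 0
    · subst ha
      rcases mul_eq_zero.mp (show c * (c + 1) = 0 by linarith) with hc | hc
      · subst hc
        refine ⟨⟨!![1, -d; 0, 1], by simp [Matrix.det_fin_two_of]⟩, ?_⟩
        show (!![1, -d; 0, 1] : Matrix (Fin 2) (Fin 2) ℤ)ᵀ * _ * _ = _
        rw [tr_fin_two]
        ext i j
        fin_cases i <;> fin_cases j <;>
          simp [Matrix.mul_apply, Fin.sum_univ_two]
      · have hc' : c = -1 := by linarith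
        subst hc'
        refine ⟨⟨!![-d, 1; -1, 0], by simp [Matrix.det_fin_two_of]⟩, ?_⟩
        show (!![-d, 1; -1, 0] : Matrix (Fin 2) (Fin 2) ℤ)ᵀ * _ * _ = _
        rw [tr_fin_two]
        ext i j
        fin_cases i <;> fin_cases j <;>
          simp [Matrix.mul_apply, Fin.sum_univ_two]
    · set x : ℤ := -(c / a) with hx
      have hc1 : c + a * x = c % a := by rw [hx, Int.emod_def]; ring
      have hr0 : 0 ≤ c + a * x := hc1 ▸ Int.emod_nonneg c ha
      have hr1 : c + a * x < |a| := by rw [hc1, Int.abs_eq_natAbs]; exact Int.emod_lt c ha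
      have h1 : a * (a * x ^ 2 + (2 * c + 1) * x + d) = (c + a * x) * (c + a * x + 1) := by
        linear_combination h
      have hA : 0 < |a| := abs_pos.mpr ha
      have habs : |a| * |a * x ^ 2 + (2 * c + 1) * x + d| = (c + a * x) * (c + a * x + 1) := by
        rw [← abs_mul, h1, abs_of_nonneg (by nlinarith)]
      have hdlt : |a * x ^ 2 + (2 * c + 1) * x + d| < |a| := by
        nlinarith [abs_nonneg (a * x ^ 2 + (2 * c + 1) * x + d),
          mul_nonneg hr0 (by linarith : (0:ℤ) ≤ |a| - (c + a * x + 1))]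
      have hlt : (a * x ^ 2 + (2 * c + 1) * x + d).natAbs < n := by
        rw [← hn]
        have h2 : ((a * x ^ 2 + (2 * c + 1) * x + d).natAbs : ℤ) < (a.natAbs : ℤ) := by
          rwa [← Int.abs_eq_natAbs, ← Int.abs_eq_natAbs]
        exact_mod_cast h2
      obtain ⟨P₀, hP₀⟩ := ih _ hlt (a * x ^ 2 + (2 * c + 1) * x + d) (-(c + a * x + 1)) a rfl
        (by linear_combination h1)
      have e : (-(c + a * x + 1) + 1 : ℤ) = -(c + a * x) := by ring
      rw [e] at hP₀
      have hdet : (!![-x, 1; -1, 0] : Matrix (Fin 2) (Fin 2) ℤ).det = 1 := by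
        simp [Matrix.det_fin_two_of]
      set B : Matrix.SpecialLinearGroup (Fin 2) ℤ := ⟨!![-x, 1; -1, 0], hdet⟩ with hB
      have hBM : (!![-x, 1; -1, 0] : Matrix (Fin 2) (Fin 2) ℤ)ᵀ * !![a, c + 1; c, d] *
          !![-x, 1; -1, 0] =
          !![a * x ^ 2 + (2 * c + 1) * x + d, -(c + a * x);
             -(c + a * x + 1), a] := by
        rw [tr_fin_two]
        ext i j
        fin_cases i <;> fin_cases j <;>
          simp [Matrix.mul_apply, Fin.sum_univ_two] <;> ring
      refine ⟨B * P₀, ?_⟩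
      have hco : ((B * P₀ : Matrix.SpecialLinearGroup (Fin 2) ℤ) : Matrix (Fin 2) (Fin 2) ℤ)
          = !![-x, 1; -1, 0] * (P₀ : Matrix (Fin 2) (Fin 2) ℤ) := rfl
      rw [hco, Matrix.transpose_mul]
      have keyeq : (P₀ : Matrix (Fin 2) (Fin 2) ℤ)ᵀ *
          ((!![-x, 1; -1, 0] : Matrix (Fin 2) (Fin 2) ℤ)ᵀ * !![a, c + 1; c, d] *
            !![-x, 1; -1, 0]) * (P₀ : Matrix (Fin 2) (Fin 2) ℤ) = !![0, 1; 0, 0] := by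
        rw [hBM]; exact hP₀
      simp only [Matrix.mul_assoc] at keyeq ⊢
      exact keyeq

/-- A ∩-symmetric 2×2 integer matrix `M` (i.e. `M - Mᵀ = J`) has determinant `0` if and
only if it is `SL(2,ℤ)`-congruent to `!![0,1;0,0]`, the matrix of the Seifert form of the
standard embedding of the torus into ℝ³. -/
theorem cap_symmetric_det_zero_iff_congruent_standard
    (M : Matrix (Fin 2) (Fin 2) ℤ) (hM : M - Mᵀ = Jmat) :
    M.det = 0 ↔ ∃ P : Matrix.SpecialLinearGroup (Fin 2) ℤ,
      (P : Matrix (Fin 2) (Fin 2) ℤ)ᵀ * M * (P : Matrix (Fin 2) (Fin 2) ℤ) = !![0, 1; 0, 0] := by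
  have h01 : M 0 1 = M 1 0 + 1 := by
    have h := congrFun (congrFun hM 0) 1
    simp [Jmat, Matrix.sub_apply, Matrix.transpose_apply] at h
    linarith
  constructor
  · intro hdet
    have hM' : M = !![M 0 0, M 1 0 + 1; M 1 0, M 1 1] := by
      ext i j
      fin_cases i <;> fin_cases j <;> simp [h01]
    have h : M 0 0 * M 1 1 = M 1 0 * (M 1 0 + 1) := by
      rw [Matrix.det_fin_two, h01] at hdet
      nlinarith [hdet]
    obtain ⟨P, hP⟩ := seifert_key (M 0 0).natAbs (M 0 0) (M 1 0) (M 1 1) rfl h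
    exact ⟨P, by rw [hM']; exact hP⟩
  · rintro ⟨P, hP⟩
    have hd := congrArg Matrix.det hP
    simp [Matrix.det_mul, Matrix.det_transpose, Matrix.det_fin_two_of] at hd
    exact hd
end

section
/- There exists a 2×2 integer matrix M that is ∩-symmetric (i.e. M − Mᵀ = J where J = !![0, 1; -1, 0]) such that for every matrix P in GL(2,ℤ) and every ε ∈ {1, −1}, Pᵀ * M * P ≠ !![0, ε; 0, 0]. (This is the algebraic content of Theorem 2(b): there are ∩-symmetric bilinear forms on H₁ of the torus that are not realizable as the Seifert form of any embedding of the torus into ℝ³, since by Theorem 2(a) every realizable form equals ((x₁,y₁),(x₂,y₂)) ↦ ±x₁y₂ in some basis.) -/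
open Matrix

/-!
The determinant of the symmetrization `M + Mᵀ` is a congruence invariant over `ℤ`: congruence by
`P` multiplies it by `(det P)² = 1`. For `M = !![1, 1; 0, 1]` it is `3`, while for
`!![0, ε; 0, 0]` with `ε = ±1` it is `-ε² = -1`.
-/

namespace Matrix

variable {n R : Type*} [Fintype n] [CommRing R]

theorem transpose_mul_mul_add_transpose (P M : Matrix n n R) :
    Pᵀ * M * P + (Pᵀ * M * P)ᵀ = Pᵀ * (M + Mᵀ) * P := by
  simp only [transpose_mul, transpose_transpose, Matrix.mul_add, Matrix.add_mul, Matrix.mul_assoc]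

theorem det_congr_add_transpose [DecidableEq n] (P M : Matrix n n R) :
    (Pᵀ * M * P + (Pᵀ * M * P)ᵀ).det = P.det ^ 2 * (M + Mᵀ).det := by
  rw [transpose_mul_mul_add_transpose, det_mul, det_mul, det_transpose]
  ring

theorem GeneralLinearGroup.det_congr_add_transpose_int [DecidableEq n] (P : GL n ℤ)
    (M : Matrix n n ℤ) :
    ((P : Matrix n n ℤ)ᵀ * M * (P : Matrix n n ℤ) +
      ((P : Matrix n n ℤ)ᵀ * M * (P : Matrix n n ℤ))ᵀ).det = (M + Mᵀ).det := by
  have hdet : (P : Matrix n n ℤ).det ^ 2 = 1 := by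
    rw [← GeneralLinearGroup.val_det_apply, ← Units.val_pow_eq_pow_val, Int.units_sq,
      Units.val_one]
  rw [Matrix.det_congr_add_transpose, hdet, one_mul]

end Matrix

/-- There is a ∩-symmetric 2×2 integer matrix `M` (i.e. `M - Mᵀ = J`) which is not
`GL(2,ℤ)`-congruent to `!![0, ε; 0, 0]` for either `ε = 1` or `ε = -1`; i.e. there are
∩-symmetric bilinear forms on `H₁` of the torus not realizable as Seifert forms of
embeddings of the torus into ℝ³. -/
theorem exists_cap_symmetric_not_congruent_standard :
    ∃ M : Matrix (Fin 2) (Fin 2) ℤ, M - Mᵀ = Jmat ∧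
      ∀ P : GL (Fin 2) ℤ, ∀ ε : ℤ, (ε = 1 ∨ ε = -1) →
        (P : Matrix (Fin 2) (Fin 2) ℤ)ᵀ * M * (P : Matrix (Fin 2) (Fin 2) ℤ) ≠
          !![0, ε; 0, 0] := by
  refine ⟨!![1, 1; 0, 1], by decide, fun P ε hε hcongr => ?_⟩
  have hinv := GeneralLinearGroup.det_congr_add_transpose_int P !![1, 1; 0, 1]
  rw [hcongr] at hinv
  rcases hε with rfl | rfl <;> revert hinv <;> decide
end
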